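/- arXiv:2109.04481 — 7 statements merged into one kernel-verified Lean document; each statement's English description precedes it below -/
import Mathlib

section
/- For positive semidefinite ρ, σ with ρ ≠ 0 and σ ≠ 0, the product R_max(ρ‖σ)·R_max(σ‖ρ) ≥ 1, with equality if and only if ρ and σ are proportional. -/
/-!
`Rmax ρ σ` is the least `λ` with `ρ ≤ λ σ` in the Loewner order: the infimum is attained because
the positive semidefinite cone is closed. If both values `λ = Rmax ρ σ`, `μ = Rmax σ ρ` are finite,
then `ρ ≤ λ σ ≤ λ μ ρ`, and `λ μ < 1` would make `(1 - λ μ) ρ` both `≥ 0` and `≤ 0`, forcing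
`ρ = 0`. If `λ μ = 1`, the chain collapses to `ρ = λ σ`.
-/

open scoped ENNReal NNReal ComplexOrder
open Matrix

variable {ι κ : Type*}

/-- Max-relative entropy (non-logarithmic): `inf { λ ≥ 0 : ρ ≤ λσ }`, with `inf ∅ = ∞`.
Here `A ≤ B` means `B - A` is positive semidefinite. -/
noncomputable def Rmax [Fintype ι] (ρ σ : Matrix ι ι ℂ) : ℝ≥0∞ :=
  sInf {x : ℝ≥0∞ | ∃ l : ℝ≥0, x = (l : ℝ≥0∞) ∧ ((l : ℝ) • σ - ρ).PosSemidef}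

/-- A state: positive semidefinite with unit trace. -/
def IsState [Fintype ι] (ρ : Matrix ι ι ℂ) : Prop :=
  ρ.PosSemidef ∧ ρ.trace = 1

/-- A pure state: a rank-one (idempotent) state. -/
def IsPure [Fintype ι] (φ : Matrix ι ι ℂ) : Prop :=
  φ.PosSemidef ∧ φ * φ = φ ∧ φ.trace = 1

/-- The cone generated by a set of states. -/
noncomputable def cone (F : Set (Matrix ι ι ℂ)) : Set (Matrix ι ι ℂ) :=
  {x | ∃ (l : ℝ≥0) (σ : Matrix ι ι ℂ), σ ∈ F ∧ x = (l : ℝ) • σ}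

/-- Projective robustness `Ω(ρ) = inf_{σ ∈ F} Rmax(ρ‖σ) Rmax(σ‖ρ)`. -/
noncomputable def Omega [Fintype ι] (F : Set (Matrix ι ι ℂ)) (ρ : Matrix ι ι ℂ) : ℝ≥0∞ :=
  ⨅ σ ∈ F, Rmax ρ σ * Rmax σ ρ

/-- Support of an operator, as the range of the associated linear map. -/
noncomputable def msupport [Fintype ι] (ρ : Matrix ι ι ℂ) : Submodule ℂ (ι → ℂ) :=
  LinearMap.range ρ.mulVecLin

/-- A positive linear map on matrices. -/
def IsPosMap [Fintype ι] [Fintype κ] (E : Matrix ι ι ℂ →ₗ[ℂ] Matrix κ κ ℂ) : Prop :=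
  ∀ ρ, ρ.PosSemidef → (E ρ).PosSemidef

/-- Maximal fidelity with the free set: `F_F(φ) = max_{σ ∈ F} ⟨φ|σ|φ⟩ = max_{σ ∈ F} Tr(φσ)`. -/
noncomputable def Ffree [Fintype ι] (F : Set (Matrix ι ι ℂ)) (φ : Matrix ι ι ℂ) : ℝ :=
  sSup {x : ℝ | ∃ σ ∈ F, x = ((φ * σ).trace).re}

open scoped MatrixOrder

theorem Matrix.isClosed_setOf_posSemidef {n 𝕜 : Type*} [Fintype n] [RCLike 𝕜] :
    IsClosed {A : Matrix n n 𝕜 | A.PosSemidef} := by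
  simp only [posSemidef_iff_dotProduct_mulVec, Set.ofPred_and, Set.ofPred_forall]
  exact (isClosed_eq (by fun_prop) (by fun_prop)).inter
    (isClosed_iInter fun x => isClosed_le continuous_const (by fun_prop))

theorem one_le_of_le_smul_self {𝕜 M : Type*} [Field 𝕜] [LinearOrder 𝕜] [IsStrictOrderedRing 𝕜]
    [AddCommGroup M] [PartialOrder M] [IsOrderedAddMonoid M] [Module 𝕜 M] [PosSMulMono 𝕜 M]
    {x : M} {c : 𝕜} (hx : 0 ≤ x) (hx0 : x ≠ 0) (h : x ≤ c • x) : 1 ≤ c := by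
  by_contra! hc
  have hle : (1 - c) • x ≤ 0 := by rwa [sub_smul, one_smul, sub_nonpos]
  have hge : 0 ≤ (1 - c) • x := smul_nonneg (sub_nonneg.mpr hc.le) hx
  exact hx0 ((smul_eq_zero.mp (hle.antisymm hge)).resolve_left (sub_ne_zero.mpr hc.ne'))

section Rmax

variable [Fintype ι] {ρ σ : Matrix ι ι ℂ}

theorem Rmax_le_coe_iff (hσ : 0 ≤ σ) {l : ℝ≥0} : Rmax ρ σ ≤ l ↔ ρ ≤ (l : ℝ) • σ := by
  set S := {l : ℝ≥0 | ρ ≤ (l : ℝ) • σ}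
  have hR : Rmax ρ σ = sInf ((↑) '' S) := by
    unfold Rmax
    congr 1
    ext x
    exact ⟨fun ⟨l, hx, hl⟩ => ⟨l, hl, hx.symm⟩, fun ⟨l, hl, hx⟩ => ⟨l, hx.symm, hl⟩⟩
  refine ⟨fun h => ?_, fun h => hR ▸ sInf_le ⟨l, h, rfl⟩⟩
  have hS : S.Nonempty := by
    by_contra hS
    simp [hR, Set.not_nonempty_iff_eq_empty.mp hS] at h
  have hmin : sInf S ∈ S :=
    (isClosed_setOf_posSemidef.preimage (by fun_prop)).csInf_mem hS (OrderBot.bddBelow S)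
  rw [hR, sInf_image, ← ENNReal.coe_sInf hS, ENNReal.coe_le_coe] at h
  exact hmin.trans (smul_le_smul_of_nonneg_right (by exact_mod_cast h) hσ)

theorem Rmax_ne_zero (hρ : 0 ≤ ρ) (hσ : 0 ≤ σ) (hρ0 : ρ ≠ 0) : Rmax ρ σ ≠ 0 := by
  intro h
  have : ρ ≤ 0 := by simpa using (Rmax_le_coe_iff hσ (l := 0)).mp h.le
  exact hρ0 (this.antisymm hρ)

theorem exists_Rmax_eq_coe (hσ : 0 ≤ σ) (h : Rmax ρ σ ≠ ⊤) :
    ∃ l : ℝ≥0, Rmax ρ σ = l ∧ ρ ≤ (l : ℝ) • σ :=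
  ⟨_, (ENNReal.coe_toNNReal h).symm, (Rmax_le_coe_iff hσ).mp (ENNReal.coe_toNNReal h).ge⟩

theorem exists_Rmax_eq_coe_of_mul_ne_top (hρ : 0 ≤ ρ) (hσ : 0 ≤ σ) (hρ0 : ρ ≠ 0) (hσ0 : σ ≠ 0)
    (h : Rmax ρ σ * Rmax σ ρ ≠ ⊤) :
    ∃ l m : ℝ≥0, Rmax ρ σ = l ∧ Rmax σ ρ = m ∧ ρ ≤ (l : ℝ) • σ ∧ σ ≤ (m : ℝ) • ρ := by
  have h₁ : Rmax ρ σ ≠ ⊤ := fun h₁ => h (by rw [h₁, ENNReal.top_mul (Rmax_ne_zero hσ hρ hσ0)])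
  have h₂ : Rmax σ ρ ≠ ⊤ := fun h₂ => h (by rw [h₂, ENNReal.mul_top (Rmax_ne_zero hρ hσ hρ0)])
  obtain ⟨l, hl, hρσ⟩ := exists_Rmax_eq_coe hσ h₁
  obtain ⟨m, hm, hσρ⟩ := exists_Rmax_eq_coe hρ h₂
  exact ⟨l, m, hl, hm, hρσ, hσρ⟩

theorem one_le_Rmax_mul_Rmax (hρ : 0 ≤ ρ) (hσ : 0 ≤ σ) (hρ0 : ρ ≠ 0) (hσ0 : σ ≠ 0) :
    1 ≤ Rmax ρ σ * Rmax σ ρ := by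
  by_cases htop : Rmax ρ σ * Rmax σ ρ = ⊤
  · simp [htop]
  obtain ⟨l, m, hl, hm, hρσ, hσρ⟩ := exists_Rmax_eq_coe_of_mul_ne_top hρ hσ hρ0 hσ0 htop
  have : ρ ≤ ((l : ℝ) * m) • ρ :=
    hρσ.trans ((smul_le_smul_of_nonneg_left hσρ l.2).trans_eq (smul_smul _ _ _))
  rw [hl, hm, ← ENNReal.coe_mul, ← ENNReal.coe_one, ENNReal.coe_le_coe, ← NNReal.coe_le_coe]
  exact one_le_of_le_smul_self hρ hρ0 this

theorem Rmax_mul_Rmax_eq_one_iff (hρ : 0 ≤ ρ) (hσ : 0 ≤ σ) (hρ0 : ρ ≠ 0) (hσ0 : σ ≠ 0) :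
    Rmax ρ σ * Rmax σ ρ = 1 ↔ ∃ c : ℝ, 0 < c ∧ ρ = c • σ := by
  constructor
  · intro h
    obtain ⟨l, m, hl, hm, hρσ, hσρ⟩ :=
      exists_Rmax_eq_coe_of_mul_ne_top hρ hσ hρ0 hσ0 (h ▸ ENNReal.one_ne_top)
    have hlm : (l : ℝ) * m = 1 := by
      rw [hl, hm, ← ENNReal.coe_mul, ← ENNReal.coe_one, ENNReal.coe_inj] at h
      exact_mod_cast h
    have hσρ' : (l : ℝ) • σ ≤ ρ := by
      simpa [smul_smul, hlm] using smul_le_smul_of_nonneg_left hσρ l.2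
    exact ⟨l, lt_of_le_of_ne l.2 (left_ne_zero_of_mul_eq_one hlm).symm, hρσ.antisymm hσρ'⟩
  · rintro ⟨c, hc, rfl⟩
    lift c to ℝ≥0 using hc.le
    have hc0 : c ≠ 0 := by exact_mod_cast hc.ne'
    refine le_antisymm ?_ (one_le_Rmax_mul_Rmax hρ hσ hρ0 hσ0)
    calc Rmax ((c : ℝ) • σ) σ * Rmax σ ((c : ℝ) • σ) ≤ c * (c⁻¹ : ℝ≥0) := by
          gcongr
          · exact (Rmax_le_coe_iff hσ).mpr le_rfl
          · refine (Rmax_le_coe_iff hρ).mpr ?_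
            rw [smul_smul, NNReal.coe_inv, inv_mul_cancel₀ hc.ne', one_smul]
      _ = 1 := by rw [← ENNReal.coe_mul, mul_inv_cancel₀ hc0, ENNReal.coe_one]

end Rmax

theorem rmax_product_ge_one_general [Fintype ι]
    (ρ σ : Matrix ι ι ℂ) (hρ : ρ.PosSemidef) (hσ : σ.PosSemidef)
    (hρ0 : ρ ≠ 0) (hσ0 : σ ≠ 0) :
    1 ≤ Rmax ρ σ * Rmax σ ρ ∧
      (Rmax ρ σ * Rmax σ ρ = 1 ↔ ∃ c : ℝ, 0 < c ∧ ρ = c • σ) :=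
  ⟨one_le_Rmax_mul_Rmax hρ.nonneg hσ.nonneg hρ0 hσ0,
    Rmax_mul_Rmax_eq_one_iff hρ.nonneg hσ.nonneg hρ0 hσ0⟩

/-- for nonzero positive semidefinite `ρ, σ`, `Rmax(ρ‖σ)·Rmax(σ‖ρ) ≥ 1`, with
equality iff `ρ` and `σ` are proportional. -/
theorem rmax_product_ge_one [Fintype ι] [DecidableEq ι]
    (ρ σ : Matrix ι ι ℂ) (hρ : ρ.PosSemidef) (hσ : σ.PosSemidef)
    (hρ0 : ρ ≠ 0) (hσ0 : σ ≠ 0) :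
    1 ≤ Rmax ρ σ * Rmax σ ρ ∧
      (Rmax ρ σ * Rmax σ ρ = 1 ↔ ∃ c : ℝ, 0 < c ∧ ρ = c • σ) :=
  rmax_product_ge_one_general ρ σ hρ hσ hρ0 hσ0
end

section
/- Let F be a nonempty closed convex set of states and define the projective robustness Ω(ρ) := inf over σ ∈ F of R_max(ρ‖σ)·R_max(σ‖ρ). If E is a positive linear map such that E(σ) ∈ cone(F) for every σ ∈ F, and E(ρ) = pρ' for some p > 0 and state ρ', then Ω(ρ) ≥ Ω(ρ'). (Strong monotonicity of the projective robustness under probabilistic free transformations.) -/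
open scoped ENNReal NNReal ComplexOrder
open Matrix

variable {ι κ : Type*}

/-! The max-relative entropy is monotone under positive maps, and the product
`Rmax ρ σ * Rmax σ ρ` is invariant under rescaling `ρ` and `σ` by positive factors. Given `σ ∈ F`
with `E σ = l • τ`, `τ ∈ F`, the candidate `τ` for `ρ'` therefore satisfies
`Rmax ρ' τ * Rmax τ ρ' = Rmax (E ρ) (E σ) * Rmax (E σ) (E ρ) ≤ Rmax ρ σ * Rmax σ ρ`.
If `l = 0`, then `E σ = 0` while `E ρ ≠ 0`, which forces `Rmax ρ σ = ∞`. -/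

namespace Rmax

variable [Fintype ι] [Fintype κ] {ρ σ : Matrix ι ι ℂ}

theorem le_of_posSemidef_sub (l : ℝ≥0) (h : ((l : ℝ) • σ - ρ).PosSemidef) : Rmax ρ σ ≤ l :=
  sInf_le ⟨l, rfl, h⟩

theorem le_of_forall_posSemidef_sub {x : ℝ≥0∞}
    (h : ∀ l : ℝ≥0, ((l : ℝ) • σ - ρ).PosSemidef → x ≤ l) : x ≤ Rmax ρ σ :=
  le_sInf fun _ ⟨l, hx, hl⟩ => hx ▸ h l hl

theorem trace_re_le_of_posSemidef_sub {l : ℝ} (h : (l • σ - ρ).PosSemidef) :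
    ρ.trace.re ≤ l * σ.trace.re := by
  have := (Complex.nonneg_iff.mp h.trace_nonneg).1
  rw [trace_sub, trace_smul, Complex.sub_re, Complex.real_smul, Complex.re_ofReal_mul] at this
  linarith

theorem one_le (hρ : ρ.trace = 1) (hσ : σ.trace = 1) : 1 ≤ Rmax ρ σ :=
  le_of_forall_posSemidef_sub fun l hl => by
    simpa [hρ, hσ] using trace_re_le_of_posSemidef_sub hl

theorem zero_right_eq_top (hρ : 0 < ρ.trace.re) : Rmax ρ 0 = ⊤ :=
  top_unique <| le_of_forall_posSemidef_sub fun l hl => by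
    simpa using (hρ.trans_le (by simpa using trace_re_le_of_posSemidef_sub hl)).false

theorem map_le {E : Matrix ι ι ℂ →ₗ[ℂ] Matrix κ κ ℂ} (hE : IsPosMap E) (ρ σ : Matrix ι ι ℂ) :
    Rmax (E ρ) (E σ) ≤ Rmax ρ σ :=
  le_of_forall_posSemidef_sub fun l hl =>
    le_of_posSemidef_sub l (by simpa [map_sub, E.map_smul_of_tower] using hE _ hl)

theorem smul_smul_le {a b : ℝ} (ha : 0 < a) (hb : 0 < b) (ρ σ : Matrix ι ι ℂ) :
    Rmax (a • ρ) (b • σ) ≤ ENNReal.ofReal (a / b) * Rmax ρ σ := by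
  have hc0 : ENNReal.ofReal (a / b) ≠ 0 := by simpa using div_pos ha hb
  rw [← ENNReal.div_le_iff' hc0 ENNReal.ofReal_ne_top]
  refine le_of_forall_posSemidef_sub fun l hl => ?_
  rw [ENNReal.div_le_iff' hc0 ENNReal.ofReal_ne_top, ENNReal.ofReal, ← ENNReal.coe_mul]
  refine le_of_posSemidef_sub _ ?_
  convert hl.smul ha.le using 1
  rw [NNReal.coe_mul, Real.coe_toNNReal _ (div_pos ha hb).le, smul_smul, smul_sub, smul_smul]
  congr 2
  field_simp

theorem mul_swap_smul_smul_le {a b : ℝ} (ha : 0 < a) (hb : 0 < b) (ρ σ : Matrix ι ι ℂ) :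
    Rmax (a • ρ) (b • σ) * Rmax (b • σ) (a • ρ) ≤ Rmax ρ σ * Rmax σ ρ :=
  calc Rmax (a • ρ) (b • σ) * Rmax (b • σ) (a • ρ)
      ≤ (ENNReal.ofReal (a / b) * Rmax ρ σ) * (ENNReal.ofReal (b / a) * Rmax σ ρ) :=
        mul_le_mul' (smul_smul_le ha hb ρ σ) (smul_smul_le hb ha σ ρ)
    _ = ENNReal.ofReal (a / b * (b / a)) * (Rmax ρ σ * Rmax σ ρ) := by
        rw [ENNReal.ofReal_mul (div_pos ha hb).le]; ring
    _ = Rmax ρ σ * Rmax σ ρ := by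
        rw [show a / b * (b / a) = 1 by field_simp, ENNReal.ofReal_one, one_mul]

theorem mul_swap_smul_smul {a b : ℝ} (ha : 0 < a) (hb : 0 < b) (ρ σ : Matrix ι ι ℂ) :
    Rmax (a • ρ) (b • σ) * Rmax (b • σ) (a • ρ) = Rmax ρ σ * Rmax σ ρ := by
  refine le_antisymm (mul_swap_smul_smul_le ha hb ρ σ) ?_
  simpa [smul_smul, ha.ne', hb.ne'] using
    mul_swap_smul_smul_le (inv_pos.mpr ha) (inv_pos.mpr hb) (a • ρ) (b • σ)

end Rmax

theorem omega_strong_monotonicity_general [Fintype ι]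
    (F : Set (Matrix ι ι ℂ)) (hFstate : ∀ σ ∈ F, IsState σ)
    (ρ ρ' : Matrix ι ι ℂ) (hρ : IsState ρ) (hρ' : IsState ρ')
    (E : Matrix ι ι ℂ →ₗ[ℂ] Matrix ι ι ℂ) (hE : IsPosMap E)
    (hEfree : ∀ σ ∈ F, E σ ∈ cone F)
    (p : ℝ) (hp : 0 < p) (hEρ : E ρ = p • ρ') :
    Omega F ρ' ≤ Omega F ρ := by
  refine le_iInf₂ fun σ hσ => ?_
  obtain ⟨l, τ, hτ, hEσ⟩ := hEfree σ hσ
  rcases eq_or_ne l 0 with rfl | hl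
  · have hEρ_trace : 0 < (E ρ).trace.re := by simpa [hEρ, hρ'.2] using hp
    have hρσ : Rmax ρ σ = ⊤ := top_unique <| by
      simpa [hEσ, Rmax.zero_right_eq_top hEρ_trace] using Rmax.map_le hE ρ σ
    have hσρ : Rmax σ ρ ≠ 0 := (zero_lt_one.trans_le (Rmax.one_le (hFstate σ hσ).2 hρ.2)).ne'
    simp [hρσ, ENNReal.top_mul hσρ]
  · calc Omega F ρ' ≤ Rmax ρ' τ * Rmax τ ρ' := iInf₂_le τ hτ
      _ = Rmax (E ρ) (E σ) * Rmax (E σ) (E ρ) := by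
        rw [hEρ, hEσ, Rmax.mul_swap_smul_smul hp (NNReal.coe_pos.mpr (pos_iff_ne_zero.mpr hl))]
      _ ≤ Rmax ρ σ * Rmax σ ρ := mul_le_mul' (Rmax.map_le hE ρ σ) (Rmax.map_le hE σ ρ)

/-- strong monotonicity of the projective robustness: if a positive linear map `E`
maps `F` into `cone F` and `E(ρ) = pρ'` with `p > 0`, then `Ω(ρ) ≥ Ω(ρ')`. -/
theorem omega_strong_monotonicity [Fintype ι] [DecidableEq ι]
    (F : Set (Matrix ι ι ℂ)) (hFne : F.Nonempty) (hFcl : IsClosed F)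
    (hFconv : Convex ℝ F) (hFstate : ∀ σ ∈ F, IsState σ)
    (ρ ρ' : Matrix ι ι ℂ) (hρ : IsState ρ) (hρ' : IsState ρ')
    (E : Matrix ι ι ℂ →ₗ[ℂ] Matrix ι ι ℂ) (hE : IsPosMap E)
    (hEfree : ∀ σ ∈ F, E σ ∈ cone F)
    (p : ℝ) (hp : 0 < p) (hEρ : E ρ = p • ρ') :
    Omega F ρ' ≤ Omega F ρ :=
  omega_strong_monotonicity_general F hFstate ρ ρ' hρ hρ' E hE hEfree p hp hEρ
end

section
/- The projective robustness admits the primal cone formulation: Ω(ρ) = inf { γ ≥ 0 : ∃ σ̃ ∈ cone(F), ρ ≤ σ̃ ≤ γρ }. -/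
open scoped ENNReal NNReal ComplexOrder
open Matrix

variable {ι κ : Type*}

/-!
Writing `σ̃ = l • σ` with `σ ∈ F`, the condition `ρ ≤ σ̃ ≤ γ • ρ` says exactly that `ρ ≤ l • σ` and
`σ ≤ (γ / l) • ρ`, so the admissible `γ` are the products `l * m` of admissible constants for
`Rmax ρ σ` and `Rmax σ ρ`. Comparing traces shows that such constants between states are at least
`1`, which gives `l ≠ 0` and rules out the product `0 * ⊤` in `ℝ≥0∞` when one `Rmax` is infinite.
-/

lemma Matrix.PosSemidef.smul_sub_smul {n : Type*} {A B : Matrix n n ℂ} {a c : ℝ}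
    (h : (a • A - B).PosSemidef) (hc : 0 ≤ c) : ((c * a) • A - c • B).PosSemidef := by
  simpa only [smul_sub, smul_smul] using h.smul hc

section Rmax

variable {n : Type*} [Fintype n] {ρ σ : Matrix n n ℂ}

lemma one_le_of_posSemidef_smul_sub (hρ : ρ.trace = 1) (hσ : σ.trace = 1) {l : ℝ≥0}
    (h : ((l : ℝ) • σ - ρ).PosSemidef) : 1 ≤ l := by
  have := h.trace_nonneg
  rw [trace_sub, trace_smul, hρ, hσ, Complex.real_smul, mul_one, sub_nonneg] at this
  exact_mod_cast this

lemma Rmax_le_coe {l : ℝ≥0} (h : ((l : ℝ) • σ - ρ).PosSemidef) : Rmax ρ σ ≤ l :=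
  sInf_le ⟨l, rfl, h⟩

lemma Rmax_eq_iInf :
    Rmax ρ σ = ⨅ l : {l : ℝ≥0 | ((l : ℝ) • σ - ρ).PosSemidef}, ((l : ℝ≥0) : ℝ≥0∞) := by
  rw [Rmax, ← sInf_image' (f := ((↑) : ℝ≥0 → ℝ≥0∞))]
  congr 1
  ext x
  simp [eq_comm, and_comm]

lemma Rmax_eq_top (h : ∀ l : ℝ≥0, ¬((l : ℝ) • σ - ρ).PosSemidef) : Rmax ρ σ = ⊤ :=
  sInf_eq_top.mpr <| by
    rintro _ ⟨l, rfl, hl⟩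
    exact absurd hl (h l)

lemma one_le_Rmax (hρ : IsState ρ) (hσ : IsState σ) : 1 ≤ Rmax ρ σ :=
  le_sInf <| by
    rintro _ ⟨l, rfl, h⟩
    exact_mod_cast one_le_of_posSemidef_smul_sub hρ.2 hσ.2 h

lemma le_Rmax_mul_Rmax (hρ : IsState ρ) (hσ : IsState σ) {a : ℝ≥0∞}
    (ha : ∀ l m : ℝ≥0, ((l : ℝ) • σ - ρ).PosSemidef → ((m : ℝ) • ρ - σ).PosSemidef →
      a ≤ (l * m : ℝ≥0)) :
    a ≤ Rmax ρ σ * Rmax σ ρ := by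
  by_cases hl : ∃ l : ℝ≥0, ((l : ℝ) • σ - ρ).PosSemidef
  · by_cases hm : ∃ m : ℝ≥0, ((m : ℝ) • ρ - σ).PosSemidef
    · obtain ⟨l, hl⟩ := hl
      obtain ⟨m, hm⟩ := hm
      rw [Rmax_eq_iInf, Rmax_eq_iInf]
      exact ENNReal.le_iInf_mul_iInf ⟨⟨l, hl⟩, ENNReal.coe_ne_top⟩ ⟨⟨m, hm⟩, ENNReal.coe_ne_top⟩
        fun l m => by exact_mod_cast ha l m l.2 m.2
    · push Not at hm
      rw [Rmax_eq_top hm, ENNReal.mul_top (one_pos.trans_le (one_le_Rmax hρ hσ)).ne']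
      exact le_top
  · push Not at hl
    rw [Rmax_eq_top hl, ENNReal.top_mul (one_pos.trans_le (one_le_Rmax hσ hρ)).ne']
    exact le_top

end Rmax

theorem omega_primal_formulation_general [Fintype ι]
    (F : Set (Matrix ι ι ℂ)) (hFstate : ∀ σ ∈ F, IsState σ)
    (ρ : Matrix ι ι ℂ) (hρ : IsState ρ) :
    Omega F ρ = sInf {γ : ℝ≥0∞ | ∃ g : ℝ≥0, γ = (g : ℝ≥0∞) ∧
      ∃ σb ∈ cone F, (σb - ρ).PosSemidef ∧ ((g : ℝ) • ρ - σb).PosSemidef} := by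
  apply le_antisymm
  · refine le_sInf ?_
    rintro _ ⟨g, rfl, _, ⟨l, σ, hσF, rfl⟩, hρσ, hσρ⟩
    have hl : l ≠ 0 :=
      (one_pos.trans_le (one_le_of_posSemidef_smul_sub hρ.2 (hFstate σ hσF).2 hρσ)).ne'
    have hσρ' : (((g / l : ℝ≥0) : ℝ) • ρ - σ).PosSemidef := by
      simpa [smul_smul, hl, div_eq_inv_mul] using hσρ.smul_sub_smul (inv_nonneg.mpr l.coe_nonneg)
    calc Omega F ρ ≤ Rmax ρ σ * Rmax σ ρ := iInf₂_le σ hσF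
      _ ≤ l * (g / l : ℝ≥0) := mul_le_mul' (Rmax_le_coe hρσ) (Rmax_le_coe hσρ')
      _ = g := by rw [← ENNReal.coe_mul, mul_div_cancel₀ _ hl]
  · refine le_iInf₂ fun σ hσF => le_Rmax_mul_Rmax hρ (hFstate σ hσF) fun l m hρσ hσρ => ?_
    refine sInf_le ⟨l * m, rfl, (l : ℝ) • σ, ⟨l, σ, hσF, rfl⟩, hρσ, ?_⟩
    simpa using hσρ.smul_sub_smul l.coe_nonneg

/-- primal cone formulation:
`Ω(ρ) = inf { γ ≥ 0 : ∃ σ̃ ∈ cone(F), ρ ≤ σ̃ ≤ γρ }`. -/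
theorem omega_primal_formulation [Fintype ι] [DecidableEq ι]
    (F : Set (Matrix ι ι ℂ)) (hFne : F.Nonempty) (hFcl : IsClosed F)
    (hFconv : Convex ℝ F) (hFstate : ∀ σ ∈ F, IsState σ)
    (ρ : Matrix ι ι ℂ) (hρ : IsState ρ) :
    Omega F ρ = sInf {γ : ℝ≥0∞ | ∃ g : ℝ≥0, γ = (g : ℝ≥0∞) ∧
      ∃ σb ∈ cone F, (σb - ρ).PosSemidef ∧ ((g : ℝ) • ρ - σb).PosSemidef} :=
  omega_primal_formulation_general F hFstate ρ hρ
end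

section
/- For any state ρ, the projective robustness satisfies Ω(ρ) ≥ R_F(ρ) / W_F(ρ), where R_F(ρ) := min over σ ∈ F of R_max(ρ‖σ) is the generalized robustness and W_F(ρ) := [min over σ ∈ F of R_max(σ‖ρ)]^{-1} is the resource weight; moreover Ω(ρ) ≥ R_F(ρ) and Ω(ρ) ≥ 1/W_F(ρ). -/
open scoped ENNReal NNReal ComplexOrder
open Matrix

variable {ι κ : Type*}

lemma one_le_Rmax_aux [Fintype ι] [DecidableEq ι] {ρ σ : Matrix ι ι ℂ}
    (hρ : IsState ρ) (hσ : IsState σ) : 1 ≤ Rmax ρ σ := by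
  refine le_sInf fun x hx => ?_
  obtain ⟨l, rfl, hpsd⟩ := hx
  have htr : (0:ℂ) ≤ ((l : ℝ) • σ - ρ).trace := by
    refine Finset.sum_nonneg fun i _ => ?_
    have := hpsd.dotProduct_mulVec_nonneg (Pi.single i 1)
    simpa [dotProduct, Pi.single_apply, apply_ite, Finset.sum_ite_eq] using this
  have : ((l : ℝ) • σ - ρ).trace = ((l : ℝ) - 1 : ℂ) := by
    rw [Matrix.trace_sub, Matrix.trace_smul, hσ.2, hρ.2]
    simp
  rw [this] at htr
  have h1 : (1:ℝ) ≤ (l:ℝ) := by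
    have := (Complex.le_def.mp htr).1
    simpa using this
  exact_mod_cast (by exact_mod_cast h1 : (1:ℝ≥0) ≤ l)

/-- `Ω(ρ) ≥ R_F(ρ)/W_F(ρ)`, `Ω(ρ) ≥ R_F(ρ)` and `Ω(ρ) ≥ 1/W_F(ρ)`, where
`R_F(ρ) = min_{σ ∈ F} Rmax(ρ‖σ)` and `1/W_F(ρ) = min_{σ ∈ F} Rmax(σ‖ρ)`. -/
theorem omega_ge_robustness_weight [Fintype ι] [DecidableEq ι]
    (F : Set (Matrix ι ι ℂ)) (hFne : F.Nonempty) (hFcpt : IsCompact F)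
    (hFconv : Convex ℝ F) (hFstate : ∀ σ ∈ F, IsState σ)
    (ρ : Matrix ι ι ℂ) (hρ : IsState ρ) :
    (⨅ σ ∈ F, Rmax ρ σ) * (⨅ σ ∈ F, Rmax σ ρ) ≤ Omega F ρ ∧
    (⨅ σ ∈ F, Rmax ρ σ) ≤ Omega F ρ ∧
    (⨅ σ ∈ F, Rmax σ ρ) ≤ Omega F ρ := by
  refine ⟨?_, ?_, ?_⟩
  · exact le_iInf₂ fun σ hσ =>
      mul_le_mul' (iInf₂_le σ hσ) (iInf₂_le σ hσ)
  · refine le_iInf₂ fun σ hσ => le_trans (iInf₂_le σ hσ) ?_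
    exact le_mul_of_one_le_right' (one_le_Rmax_aux (hFstate σ hσ) hρ)
  · refine le_iInf₂ fun σ hσ => le_trans (iInf₂_le σ hσ) ?_
    exact le_mul_of_one_le_left' (one_le_Rmax_aux hρ (hFstate σ hσ))
end

section
/- If φ is a pure state with φ ∉ F, then Ω(φ) = ∞; more generally Ω(ρ) = ∞ for any resourceful state ρ whose support admits no free state with equal support. In particular, if Ω(ρ) < ∞, there exists no positive linear free map E (i.e., E(σ) ∈ cone(F) for all σ ∈ F) with E(ρ) ∝ φ for a pure resourceful φ. -/
open scoped ENNReal NNReal ComplexOrder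
open Matrix

variable {ι κ : Type*}

/-! If `Ω(ρ) < ∞`, some free `σ` has `Rmax(ρ‖σ)` and `Rmax(σ‖ρ)` finite, i.e. `ρ ≤ l σ` and
`σ ≤ m ρ`. For positive semidefinite `A ≤ B` every vector killed by `B` is killed by `A`, so
(ranges of Hermitian matrices being orthogonal complements of kernels) `supp A ⊆ supp B`; hence
`supp σ = supp ρ`. A pure state `φ` is an idempotent of trace one, so its support is a line and
`φ X φ ∈ ℂ φ` for every `X`; a state `σ` with `supp σ ⊆ supp φ` satisfies `σ = φ σ φ`, and the
trace then gives `σ = φ`. A positive map `E` with `E(F) ⊆ cone F` preserves both inequalities, so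
`E ρ = p φ` would put some free state inside `supp φ`, forcing `φ ∈ F`. -/

lemma LinearMap.IsSymmetric.range_eq_orthogonal_ker {𝕜 E : Type*} [RCLike 𝕜]
    [NormedAddCommGroup E] [InnerProductSpace 𝕜 E] [FiniteDimensional 𝕜 E] {T : E →ₗ[𝕜] E}
    (hT : T.IsSymmetric) : LinearMap.range T = (LinearMap.ker T)ᗮ := by
  rw [← hT.orthogonal_range, Submodule.orthogonal_orthogonal]

namespace Matrix

variable [Fintype ι] [DecidableEq ι]

lemma mem_msupport_iff_toLp_mem_range {A : Matrix ι ι ℂ} {y : ι → ℂ} :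
    y ∈ msupport A ↔ WithLp.toLp 2 y ∈ LinearMap.range (toEuclideanLin A) := by
  constructor
  · rintro ⟨x, rfl⟩
    exact ⟨WithLp.toLp 2 x, rfl⟩
  · rintro ⟨x, hx⟩
    exact ⟨WithLp.ofLp x, congrArg WithLp.ofLp hx⟩

lemma IsHermitian.msupport_le_of_ker_le {A B : Matrix ι ι ℂ} (hA : A.IsHermitian)
    (hB : B.IsHermitian) (h : ∀ x, B *ᵥ x = 0 → A *ᵥ x = 0) : msupport A ≤ msupport B := by
  intro y hy
  rw [mem_msupport_iff_toLp_mem_range,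
    (isSymmetric_toEuclideanLin_iff.mpr hA).range_eq_orthogonal_ker] at hy
  rw [mem_msupport_iff_toLp_mem_range,
    (isSymmetric_toEuclideanLin_iff.mpr hB).range_eq_orthogonal_ker]
  refine Submodule.orthogonal_le (fun x hx => ?_) hy
  exact congrArg (WithLp.toLp 2) (h _ (congrArg WithLp.ofLp hx))

lemma PosSemidef.msupport_le_of_posSemidef_sub {A B : Matrix ι ι ℂ} (hA : A.PosSemidef)
    (hBA : (B - A).PosSemidef) : msupport A ≤ msupport B := by
  have hB : B.IsHermitian := by simpa using hBA.1.add hA.1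
  refine hA.1.msupport_le_of_ker_le hB fun x hx => (hA.dotProduct_mulVec_zero_iff x).mp ?_
  have hsub := hBA.dotProduct_mulVec_nonneg x
  rw [sub_mulVec, hx, zero_sub, dotProduct_neg, neg_nonneg] at hsub
  exact le_antisymm hsub (hA.dotProduct_mulVec_nonneg x)

end Matrix

section Support

variable [Fintype ι]

lemma msupport_smul_le (c : ℝ) (A : Matrix ι ι ℂ) : msupport (c • A) ≤ msupport A := by
  rintro _ ⟨x, rfl⟩
  exact ⟨c • x, by simp⟩

lemma msupport_smul {c : ℝ} (hc : c ≠ 0) (A : Matrix ι ι ℂ) : msupport (c • A) = msupport A := by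
  refine le_antisymm (msupport_smul_le c A) ?_
  simpa [smul_smul, hc] using msupport_smul_le c⁻¹ (c • A)

lemma mul_eq_of_msupport_le {P A : Matrix ι ι ℂ} (hP : P * P = P)
    (h : msupport A ≤ msupport P) : P * A = A := by
  refine Matrix.ext_iff_mulVec.mpr fun x => ?_
  obtain ⟨w, hw : P *ᵥ w = A *ᵥ x⟩ := h ⟨x, rfl⟩
  rw [← Matrix.mulVec_mulVec, ← hw, Matrix.mulVec_mulVec, hP]

lemma exists_mul_mul_eq_smul_of_finrank_msupport_eq_one {P : Matrix ι ι ℂ}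
    (hP : Module.finrank ℂ (msupport P) = 1) (A : Matrix ι ι ℂ) :
    ∃ a : ℂ, P * A * P = a • P := by
  obtain ⟨v, -, hv⟩ := finrank_eq_one_iff'.mp hP
  obtain ⟨a, ha⟩ := hv ⟨P *ᵥ (A *ᵥ v), ⟨A *ᵥ v, rfl⟩⟩
  refine ⟨a, Matrix.ext_iff_mulVec.mpr fun x => ?_⟩
  obtain ⟨c, hc⟩ := hv ⟨P *ᵥ x, ⟨x, rfl⟩⟩
  have ha' : P *ᵥ (A *ᵥ v) = a • (v : ι → ℂ) := congrArg Subtype.val ha.symm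
  have hc' : P *ᵥ x = c • (v : ι → ℂ) := congrArg Subtype.val hc.symm
  rw [← Matrix.mulVec_mulVec, ← Matrix.mulVec_mulVec, hc', Matrix.mulVec_smul,
    Matrix.mulVec_smul, ha', Matrix.smul_mulVec, hc', smul_comm]

end Support

section Pure

variable [Fintype ι] [DecidableEq ι] {φ : Matrix ι ι ℂ}

lemma IsPure.finrank_msupport (hφ : IsPure φ) : Module.finrank ℂ (msupport φ) = 1 := by
  have hidem : IsIdempotentElem (Matrix.toLinAlgEquiv' φ) :=
    (show IsIdempotentElem φ from hφ.2.1).map _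
  have htr := (LinearMap.IsIdempotentElem.isProj_range _ hidem).trace
  change LinearMap.trace ℂ _ (Matrix.toLin' φ) = (Module.finrank ℂ (msupport φ) : ℂ) at htr
  rw [Matrix.trace_toLin'_eq, hφ.2.2] at htr
  exact_mod_cast htr.symm

lemma IsPure.eq_of_msupport_le {σ : Matrix ι ι ℂ} (hφ : IsPure φ) (hσ : IsState σ)
    (h : msupport σ ≤ msupport φ) : σ = φ := by
  have hleft : φ * σ = σ := mul_eq_of_msupport_le hφ.2.1 h
  have hright : σ * φ = σ := by
    simpa [Matrix.conjTranspose_mul, hσ.1.1.eq, hφ.1.1.eq] using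
      congrArg Matrix.conjTranspose hleft
  obtain ⟨a, ha⟩ := exists_mul_mul_eq_smul_of_finrank_msupport_eq_one hφ.finrank_msupport σ
  have hσa : σ = a • φ := by rw [← ha, mul_assoc, hright, hleft]
  have ha1 : a = 1 := by simpa [hσa, hφ.2.2] using hσ.2
  rw [hσa, ha1, one_smul]

end Pure

section Robustness

variable [Fintype ι]

lemma exists_posSemidef_sub_of_rmax_ne_top {ρ σ : Matrix ι ι ℂ} (h : Rmax ρ σ ≠ ⊤) :
    ∃ l : ℝ, (l • σ - ρ).PosSemidef := by
  by_contra! hc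
  refine h (sInf_eq_top.mpr ?_)
  rintro _ ⟨l, rfl, hl⟩
  exact (hc l hl).elim

lemma one_le_rmax {ρ σ : Matrix ι ι ℂ} (hρ : IsState ρ) (hσ : IsState σ) : 1 ≤ Rmax ρ σ := by
  refine le_sInf ?_
  rintro _ ⟨l, rfl, hl⟩
  have htr := hl.trace_nonneg
  rw [Matrix.trace_sub, Matrix.trace_smul, hρ.2, hσ.2] at htr
  have : (1 : ℝ) ≤ l := by simpa [Complex.le_def] using htr
  exact_mod_cast this

lemma exists_mem_rmax_ne_top_of_omega_ne_top {F : Set (Matrix ι ι ℂ)}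
    (hF : ∀ σ ∈ F, IsState σ) {ρ : Matrix ι ι ℂ} (hρ : IsState ρ) (h : Omega F ρ ≠ ⊤) :
    ∃ σ ∈ F, Rmax ρ σ ≠ ⊤ ∧ Rmax σ ρ ≠ ⊤ := by
  obtain ⟨σ, hσ, hprod⟩ : ∃ σ ∈ F, Rmax ρ σ * Rmax σ ρ ≠ ⊤ := by
    simpa [Omega] using h
  have hpos : ∀ {a b : Matrix ι ι ℂ}, IsState a → IsState b → Rmax a b ≠ 0 := fun ha hb =>
    (zero_lt_one.trans_le (one_le_rmax ha hb)).ne'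
  refine ⟨σ, hσ, fun htop => hprod ?_, fun htop => hprod ?_⟩
  · rw [htop, ENNReal.top_mul (hpos (hF σ hσ) hρ)]
  · rw [htop, ENNReal.mul_top (hpos hρ (hF σ hσ))]

variable [DecidableEq ι]

lemma msupport_le_of_rmax_ne_top {ρ σ : Matrix ι ι ℂ} (hρ : ρ.PosSemidef) (h : Rmax ρ σ ≠ ⊤) :
    msupport ρ ≤ msupport σ := by
  obtain ⟨l, hl⟩ := exists_posSemidef_sub_of_rmax_ne_top h
  exact (hρ.msupport_le_of_posSemidef_sub hl).trans (msupport_smul_le l σ)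

lemma exists_mem_msupport_eq_of_omega_ne_top {F : Set (Matrix ι ι ℂ)}
    (hF : ∀ σ ∈ F, IsState σ) {ρ : Matrix ι ι ℂ} (hρ : IsState ρ) (h : Omega F ρ ≠ ⊤) :
    ∃ σ ∈ F, msupport σ = msupport ρ := by
  obtain ⟨σ, hσ, hρσ, hσρ⟩ := exists_mem_rmax_ne_top_of_omega_ne_top hF hρ h
  exact ⟨σ, hσ, le_antisymm (msupport_le_of_rmax_ne_top (hF σ hσ).1 hσρ)
    (msupport_le_of_rmax_ne_top hρ.1 hρσ)⟩

lemma IsPure.mem_of_isPosMap_apply_eq_smul {F : Set (Matrix ι ι ℂ)} (hF : ∀ σ ∈ F, IsState σ)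
    {E : Matrix ι ι ℂ →ₗ[ℂ] Matrix ι ι ℂ} (hE : IsPosMap E) (hEF : ∀ σ ∈ F, E σ ∈ cone F)
    {ρ σ φ : Matrix ι ι ℂ} {p : ℝ} (hφ : IsPure φ) (hp : 0 < p) (hEρ : E ρ = p • φ)
    (hσ : σ ∈ F) (hρσ : Rmax ρ σ ≠ ⊤) (hσρ : Rmax σ ρ ≠ ⊤) : φ ∈ F := by
  obtain ⟨l, hl⟩ := exists_posSemidef_sub_of_rmax_ne_top hρσ
  obtain ⟨m, hm⟩ := exists_posSemidef_sub_of_rmax_ne_top hσρ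
  obtain ⟨k, σ', hσ', hEσ⟩ := hEF σ hσ
  have hl' := hE _ hl
  have hm' := hE _ hm
  rw [map_sub, LinearMap.map_smul_of_tower, hEσ, hEρ] at hl' hm'
  have hk : (k : ℝ) ≠ 0 := by
    intro hk
    have htr := hl'.trace_nonneg
    rw [hk, zero_smul, smul_zero, zero_sub, Matrix.trace_neg, Matrix.trace_smul, hφ.2.2] at htr
    have : p ≤ 0 := by simpa [Complex.le_def] using htr
    exact hp.not_ge this
  have hsupp : msupport σ' ≤ msupport φ := calc
    msupport σ' = msupport ((k : ℝ) • σ') := (msupport_smul hk σ').symm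
    _ ≤ msupport (m • p • φ) := ((hF σ' hσ').1.smul k.2).msupport_le_of_posSemidef_sub hm'
    _ ≤ msupport (p • φ) := msupport_smul_le m _
    _ = msupport φ := msupport_smul hp.ne' φ
  exact hφ.eq_of_msupport_le (hF σ' hσ') hsupp ▸ hσ'

end Robustness

theorem omega_infinite_and_no_purification_general [Fintype ι] [DecidableEq ι]
    (F : Set (Matrix ι ι ℂ)) (hFstate : ∀ σ ∈ F, IsState σ) :
    (∀ φ : Matrix ι ι ℂ, IsPure φ → φ ∉ F → Omega F φ = ⊤) ∧
    (∀ ρ : Matrix ι ι ℂ, IsState ρ → ρ ∉ F →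
      (¬ ∃ σ ∈ F, msupport σ = msupport ρ) → Omega F ρ = ⊤) ∧
    (∀ ρ : Matrix ι ι ℂ, IsState ρ → Omega F ρ < ⊤ →
      ¬ ∃ (E : Matrix ι ι ℂ →ₗ[ℂ] Matrix ι ι ℂ) (φ : Matrix ι ι ℂ) (p : ℝ),
        IsPosMap E ∧ (∀ σ ∈ F, E σ ∈ cone F) ∧
        IsPure φ ∧ φ ∉ F ∧ 0 < p ∧ E ρ = p • φ) := by
  refine ⟨fun φ hφ hφF => ?_, fun ρ hρ _ hno => ?_, ?_⟩
  · by_contra hΩ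
    obtain ⟨σ, hσ, hsupp⟩ :=
      exists_mem_msupport_eq_of_omega_ne_top hFstate ⟨hφ.1, hφ.2.2⟩ hΩ
    exact hφF (hφ.eq_of_msupport_le (hFstate σ hσ) hsupp.le ▸ hσ)
  · by_contra hΩ
    exact hno (exists_mem_msupport_eq_of_omega_ne_top hFstate hρ hΩ)
  · rintro ρ hρ hΩ ⟨E, φ, p, hE, hEF, hφ, hφF, hp, hEρ⟩
    obtain ⟨σ, hσ, hρσ, hσρ⟩ := exists_mem_rmax_ne_top_of_omega_ne_top hFstate hρ hΩ.ne
    exact hφF (hφ.mem_of_isPosMap_apply_eq_smul hFstate hE hEF hp hEρ hσ hρσ hσρ)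

/-- `Ω(φ) = ∞` for every resourceful pure state; more generally `Ω(ρ) = ∞` when no
free state shares the support of `ρ`; hence a state with finite `Ω` cannot be mapped by any free
positive map to (a positive multiple of) a resourceful pure state. -/
theorem omega_infinite_and_no_purification [Fintype ι] [DecidableEq ι]
    (F : Set (Matrix ι ι ℂ)) (hFne : F.Nonempty) (hFcl : IsClosed F)
    (hFconv : Convex ℝ F) (hFstate : ∀ σ ∈ F, IsState σ) :
    (∀ φ : Matrix ι ι ℂ, IsPure φ → φ ∉ F → Omega F φ = ⊤) ∧
    (∀ ρ : Matrix ι ι ℂ, IsState ρ → ρ ∉ F →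
      (¬ ∃ σ ∈ F, msupport σ = msupport ρ) → Omega F ρ = ⊤) ∧
    (∀ ρ : Matrix ι ι ℂ, IsState ρ → Omega F ρ < ⊤ →
      ¬ ∃ (E : Matrix ι ι ℂ →ₗ[ℂ] Matrix ι ι ℂ) (φ : Matrix ι ι ℂ) (p : ℝ),
        IsPosMap E ∧ (∀ σ ∈ F, E σ ∈ cone F) ∧
        IsPure φ ∧ φ ∉ F ∧ 0 < p ∧ E ρ = p • φ) :=
  omega_infinite_and_no_purification_general F hFstate
end

section
/- Lower bound on Ω from fidelity with a pure state: for any state τ and pure state φ with ⟨φ|τ|φ⟩ ≥ 1 - ε and ε < 1 - F_F(φ), it holds that Ω(τ) ≥ (1-ε)(1 - F_F(φ)) / (ε · F_F(φ)). -/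
open scoped ENNReal NNReal ComplexOrder
open Matrix

variable {ι κ : Type*}

/-! Testing the operator inequalities `τ ≤ λ σ` and `σ ≤ μ τ` against the positive operators
`φ` and `1 - φ` gives `λ ≥ (1 - ε) / F_F(φ)` and `μ ≥ (1 - F_F(φ)) / ε` for every free `σ`. -/

namespace Matrix

variable {n 𝕜 : Type*} [Fintype n] [DecidableEq n] [RCLike 𝕜]

open scoped MatrixOrder in
theorem PosSemidef.trace_mul_nonneg {A B : Matrix n n 𝕜} (hA : A.PosSemidef)
    (hB : B.PosSemidef) : 0 ≤ (A * B).trace := by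
  have hsqrt : (CFC.sqrt A).PosSemidef := (CFC.sqrt_nonneg A).posSemidef
  calc (0 : 𝕜) ≤ (CFC.sqrt A * B * (CFC.sqrt A)ᴴ).trace :=
        (hB.mul_mul_conjTranspose_same _).trace_nonneg
    _ = (A * B).trace := by
        rw [hsqrt.isHermitian.eq, trace_mul_cycle, CFC.sqrt_mul_sqrt_self A hA.nonneg]

open scoped MatrixOrder in
theorem posSemidef_one_sub_of_isStarProjection {P : Matrix n n 𝕜} (hP : IsStarProjection P) :
    (1 - P).PosSemidef :=
  hP.one_sub_nonneg.posSemidef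

end Matrix

section

variable {ι : Type*} [Fintype ι] {P φ ρ σ : Matrix ι ι ℂ}

theorem ofReal_div_le_Rmax [DecidableEq ι] (hP : P.PosSemidef) {a b : ℝ} (hb : 0 < b)
    (ha : a ≤ (P * ρ).trace.re) (hσ : (P * σ).trace.re ≤ b) :
    ENNReal.ofReal (a / b) ≤ Rmax ρ σ := by
  refine le_sInf ?_
  rintro _ ⟨l, rfl, hl⟩
  have htest : 0 ≤ (P * ((l : ℝ) • σ - ρ)).trace.re :=
    Complex.nonneg_iff.mp (hP.trace_mul_nonneg hl) |>.1
  rw [mul_sub, mul_smul_comm, trace_sub, trace_smul, Complex.sub_re, Complex.smul_re,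
    smul_eq_mul] at htest
  rw [← ENNReal.ofReal_coe_nnreal]
  refine ENNReal.ofReal_le_ofReal ((div_le_iff₀ hb).mpr ?_)
  nlinarith [l.coe_nonneg]

theorem IsPure.isStarProjection (hφ : IsPure φ) : IsStarProjection φ :=
  ⟨hφ.2.1, hφ.1.1⟩

theorem IsState.re_trace_one_sub_mul [DecidableEq ι] (hρ : IsState ρ) :
    ((1 - φ) * ρ).trace.re = 1 - (φ * ρ).trace.re := by
  rw [sub_mul, one_mul, trace_sub, Complex.sub_re, hρ.2, Complex.one_re]

theorem IsPure.re_trace_mul_le_one (hφ : IsPure φ) (hρ : IsState ρ) :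
    (φ * ρ).trace.re ≤ 1 := by
  classical
  have h := Complex.nonneg_iff.mp
    ((posSemidef_one_sub_of_isStarProjection hφ.isStarProjection).trace_mul_nonneg hρ.1) |>.1
  rw [hρ.re_trace_one_sub_mul] at h
  linarith

theorem re_trace_mul_le_Ffree {F : Set (Matrix ι ι ℂ)} (hF : ∀ σ ∈ F, IsState σ)
    (hφ : IsPure φ) (hσ : σ ∈ F) : (φ * σ).trace.re ≤ Ffree F φ := by
  refine le_csSup ⟨1, ?_⟩ ⟨σ, hσ, rfl⟩
  rintro _ ⟨σ', hσ', rfl⟩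
  exact hφ.re_trace_mul_le_one (hF σ' hσ')

end

theorem omega_lower_bound_from_fidelity_general [Fintype ι]
    (F : Set (Matrix ι ι ℂ)) (hFstate : ∀ σ ∈ F, IsState σ)
    (φ : Matrix ι ι ℂ) (hφ : IsPure φ)
    (hFφ0 : 0 < Ffree F φ)
    (τ : Matrix ι ι ℂ) (hτ : IsState τ)
    (ε : ℝ) (hε : ε < 1 - Ffree F φ) (hfid : 1 - ε ≤ ((φ * τ).trace).re) :
    ENNReal.ofReal ((1 - ε) * (1 - Ffree F φ) / (ε * Ffree F φ)) ≤ Omega F τ := by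
  classical
  have hε_nonneg : 0 ≤ ε := by linarith [hφ.re_trace_mul_le_one hτ]
  obtain rfl | hε_pos := hε_nonneg.eq_or_lt
  · simp -- the bound is `x / 0 = 0`
  refine le_iInf₂ fun σ hσ => ?_
  have hσF := re_trace_mul_le_Ffree hFstate hφ hσ
  have hτσ : ENNReal.ofReal ((1 - ε) / Ffree F φ) ≤ Rmax τ σ :=
    ofReal_div_le_Rmax hφ.1 hFφ0 hfid hσF
  have hστ : ENNReal.ofReal ((1 - Ffree F φ) / ε) ≤ Rmax σ τ :=
    ofReal_div_le_Rmax (posSemidef_one_sub_of_isStarProjection hφ.isStarProjection) hε_pos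
      (by rw [(hFstate σ hσ).re_trace_one_sub_mul]; linarith)
      (by rw [hτ.re_trace_one_sub_mul]; linarith)
  calc ENNReal.ofReal ((1 - ε) * (1 - Ffree F φ) / (ε * Ffree F φ))
      = ENNReal.ofReal ((1 - ε) / Ffree F φ) * ENNReal.ofReal ((1 - Ffree F φ) / ε) := by
        rw [← ENNReal.ofReal_mul (div_nonneg (by linarith) hFφ0.le), div_mul_div_comm,
          mul_comm ε]
    _ ≤ Rmax τ σ * Rmax σ τ := mul_le_mul' hτσ hστ

/-- fidelity lower bound on the projective robustness:
`Ω(τ) ≥ (1-ε)(1-F_F(φ)) / (ε·F_F(φ))`. -/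
theorem omega_lower_bound_from_fidelity [Fintype ι] [DecidableEq ι]
    (F : Set (Matrix ι ι ℂ)) (hFne : F.Nonempty) (hFcpt : IsCompact F)
    (hFconv : Convex ℝ F) (hFstate : ∀ σ ∈ F, IsState σ)
    (φ : Matrix ι ι ℂ) (hφ : IsPure φ)
    (hFφ0 : 0 < Ffree F φ) (hFφ1 : Ffree F φ < 1)
    (τ : Matrix ι ι ℂ) (hτ : IsState τ)
    (ε : ℝ) (hε : ε < 1 - Ffree F φ) (hfid : 1 - ε ≤ ((φ * τ).trace).re) :
    ENNReal.ofReal ((1 - ε) * (1 - Ffree F φ) / (ε * Ffree F φ)) ≤ Omega F τ :=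
  omega_lower_bound_from_fidelity_general F hFstate φ hφ hFφ0 τ hτ ε hε hfid
end

section
/- If F is affine (F = A ∩ {states} for an affine subspace A of Hermitian operators) and ρ ≤ σ̃ ≤ γρ with σ̃ ∈ cone(F), then |Tr(Wρ)| ≤ (γ-1)/(γ+1) · Tr(ρ) for any Hermitian W with Tr(Wσ) = 0 for all σ ∈ F and -I ≤ W ≤ I. -/
open scoped ENNReal NNReal ComplexOrder
open Matrix

variable {ι κ : Type*}

lemma trace_re_nonneg_of_psd' {ι : Type*} [Fintype ι] {A : Matrix ι ι ℂ}
    (hA : A.PosSemidef) : 0 ≤ (A.trace).re := by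
  classical
  have hd : ∀ i, 0 ≤ A i i := fun i => hA.diag_nonneg
  have : (0:ℂ) ≤ A.trace := Finset.sum_nonneg fun i _ => hd i
  exact (Complex.le_def.mp this).1

lemma trace_mul_re_nonneg_of_psd' {ι : Type*} [Fintype ι] [DecidableEq ι]
    {A B : Matrix ι ι ℂ} (hA : A.PosSemidef) (hB : B.PosSemidef) :
    0 ≤ ((A * B).trace).re := by
  obtain ⟨C, rfl⟩ : ∃ C : Matrix ι ι ℂ, B = Cᴴ * C := by
    open scoped MatrixOrder in exact CStarAlgebra.nonneg_iff_eq_star_mul_self.mp hB.nonneg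
  have h1 : (A * (Cᴴ * C)).trace = (C * A * Cᴴ).trace := by
    rw [← mul_assoc, trace_mul_comm, ← mul_assoc]
  rw [h1]
  exact trace_re_nonneg_of_psd' (hA.mul_mul_conjTranspose_same C)

/-- witness-type necessary condition in affine theories: if `F = A ∩ {states}` for
an affine subspace `A`, `W` is a witness (`Tr(Wσ) = 0` on `F`, `-I ≤ W ≤ I`), and
`ρ ≤ σ̃ ≤ γρ` with `σ̃ ∈ cone(F)`, then `|Tr(Wρ)| ≤ (γ-1)/(γ+1)·Tr(ρ)`. -/
theorem affine_witness_bound [Fintype ι] [DecidableEq ι]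
    (F : Set (Matrix ι ι ℂ)) (hFne : F.Nonempty)
    (hFaffine : ∃ A : AffineSubspace ℝ (Matrix ι ι ℂ),
      F = {x | x ∈ (A : Set (Matrix ι ι ℂ)) ∧ IsState x})
    (W : Matrix ι ι ℂ) (hW : W.IsHermitian)
    (hWfree : ∀ σ ∈ F, (W * σ).trace = 0)
    (hWub : ((1 : Matrix ι ι ℂ) - W).PosSemidef)
    (hWlb : (W + (1 : Matrix ι ι ℂ)).PosSemidef)
    (ρ : Matrix ι ι ℂ) (hρ : IsState ρ)
    (σb : Matrix ι ι ℂ) (hσb : σb ∈ cone F)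
    (γ : ℝ) (hγ : 1 ≤ γ)
    (h₁ : (σb - ρ).PosSemidef) (h₂ : (γ • ρ - σb).PosSemidef) :
    |((W * ρ).trace).re| ≤ (γ - 1) / (γ + 1) * (ρ.trace).re := by

  classical
  have hWσb : (W * σb).trace = 0 := by
    obtain ⟨l, σ, hσF, rfl⟩ := hσb
    rw [Matrix.mul_smul, trace_smul, hWfree σ hσF, smul_zero]
  set a : ℝ := ((W * ρ).trace).re with ha
  set s : ℝ := (σb.trace).re with hs
  have hρtr : ρ.trace = 1 := hρ.2
  have e1 : ((1 - W) * (σb - ρ)).trace = σb.trace - ρ.trace - (W * σb).trace + (W * ρ).trace := by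
    rw [Matrix.sub_mul, Matrix.mul_sub, Matrix.mul_sub, Matrix.one_mul, Matrix.one_mul,
      trace_sub, trace_sub, trace_sub]
    ring
  have e2 : ((W + 1) * (σb - ρ)).trace = (W * σb).trace - (W * ρ).trace + σb.trace - ρ.trace := by
    rw [Matrix.add_mul, Matrix.mul_sub, Matrix.mul_sub, Matrix.one_mul, Matrix.one_mul,
      trace_add, trace_sub, trace_sub]
    ring
  have e3 : ((1 - W) * (γ • ρ - σb)).trace
      = γ • ρ.trace - σb.trace - γ • (W * ρ).trace + (W * σb).trace := by
    rw [Matrix.sub_mul, Matrix.mul_sub, Matrix.mul_sub, Matrix.one_mul, Matrix.one_mul,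
      Matrix.mul_smul, trace_sub, trace_sub, trace_sub, trace_smul, trace_smul]
    ring
  have e4 : ((W + 1) * (γ • ρ - σb)).trace
      = γ • (W * ρ).trace - (W * σb).trace + γ • ρ.trace - σb.trace := by
    rw [Matrix.add_mul, Matrix.mul_sub, Matrix.mul_sub, Matrix.one_mul, Matrix.one_mul,
      Matrix.mul_smul, trace_add, trace_sub, trace_sub, trace_smul, trace_smul]
    ring
  have h1 : (0:ℝ) ≤ s - 1 + a := by
    have := trace_mul_re_nonneg_of_psd' hWub h₁
    rw [e1, hWσb, hρtr] at this
    simpa [Complex.sub_re, Complex.add_re] using this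
  have h2 : (0:ℝ) ≤ -a + s - 1 := by
    have := trace_mul_re_nonneg_of_psd' hWlb h₁
    rw [e2, hWσb, hρtr] at this
    simpa [Complex.sub_re, Complex.add_re] using this
  have h3 : (0:ℝ) ≤ γ - s - γ * a := by
    have := trace_mul_re_nonneg_of_psd' hWub h₂
    rw [e3, hWσb, hρtr] at this
    simpa [Complex.sub_re, Complex.add_re, Complex.smul_re] using this
  have h4 : (0:ℝ) ≤ γ * a + γ - s := by
    have := trace_mul_re_nonneg_of_psd' hWlb h₂
    rw [e4, hWσb, hρtr] at this
    simpa [Complex.sub_re, Complex.add_re, Complex.smul_re] using this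
  have hγ1 : (0:ℝ) < γ + 1 := by linarith
  have htr1 : (ρ.trace).re = 1 := by rw [hρtr]; simp
  rw [htr1, mul_one, abs_le]
  constructor
  · rw [neg_le, ← sub_nonneg]
    have : -a ≤ (γ - 1) / (γ + 1) := by
      rw [le_div_iff₀ hγ1]
      nlinarith
    linarith
  · rw [le_div_iff₀ hγ1]
    nlinarith
end
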